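/- arXiv:2410.07231 — 3 statements merged into one kernel-verified Lean document; each statement's English description precedes it below -/
import Mathlib

section
/- Let A be a 2×2 matrix with integer entries such that det A = 1 and tr A > 2, and let v = (v₀, v₁) ∈ ℝ² be a nonzero vector with A·v = λ₊·v, where λ₊ = (tr A + √((tr A)² − 4))/2. Then every orbit of the linear flow on the 2-torus in direction v is dense: for every x ∈ ℝ², the map ℝ → 𝕋² = (ℝ/ℤ)² sending t to the class of (x₀ + t·v₀, x₁ + t·v₁) has dense range. -/
/-!
The eigenvalue `λ₊` is irrational because `(tr A)² - 4` lies strictly between two consecutive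
squares, and then the first row of the eigenvalue equation, `λ₊ = a₀₀ + a₀₁ · v₁ / v₀`, makes the
slope `α = v₁ / v₀` of the flow irrational. The orbit through `x` meets the circle
`{y} × ℝ/ℤ` in a translate of `ℤ • α`, which is dense by Kronecker's theorem; so the closure of the
orbit contains every such circle, i.e. the whole torus.
-/

theorem irrational_add_sqrt_sq_sub_four_div_two {t : ℤ} (ht : 2 < t) :
    Irrational (((t : ℝ) + √((t : ℝ) ^ 2 - 4)) / 2) := by
  have hsqrt : Irrational √((t : ℝ) ^ 2 - 4) := by
    have hcast : (t : ℝ) ^ 2 - 4 = ((t ^ 2 - 4 : ℤ) : ℝ) := by push_cast; ring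
    rw [hcast, irrational_sqrt_intCast_iff_of_nonneg (by nlinarith)]
    rintro ⟨s, hs⟩
    have hs' : |s| * |s| = t ^ 2 - 4 := by rw [abs_mul_abs_self]; omega
    have hlt : |s| < t := by nlinarith [abs_nonneg s]
    nlinarith [abs_nonneg s, show |s| ≤ t - 1 by omega]
  simpa using (hsqrt.intCast_add t).div_intCast (m := 2) two_ne_zero

theorem irrational_slope_of_mulVec_eq_smul {A : Matrix (Fin 2) (Fin 2) ℤ} {μ : ℝ}
    (hμ : Irrational μ) {v : Fin 2 → ℝ} (hv : v ≠ 0)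
    (heig : (A.map (Int.cast : ℤ → ℝ)).mulVec v = μ • v) : Irrational (v 1 / v 0) := by
  have row0 := congrFun heig 0
  have row1 := congrFun heig 1
  simp only [Matrix.mulVec, dotProduct, Fin.sum_univ_two, Matrix.map_apply,
    Pi.smul_apply, smul_eq_mul] at row0 row1
  have hv0 : v 0 ≠ 0 := by
    intro hv0
    have hv1 : v 1 ≠ 0 := fun hv1 => hv (funext fun i => by fin_cases i <;> assumption)
    refine hμ.ne_int (A 1 1) (mul_right_cancel₀ hv1 ?_)
    simpa [hv0] using row1.symm
  rintro ⟨q, hq⟩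
  refine hμ ⟨A 0 0 + A 0 1 * q, ?_⟩
  push_cast
  rw [hq]
  field_simp
  linarith

theorem denseRange_addCircle_linear_flow {v : Fin 2 → ℝ} (hv : Irrational (v 1 / v 0))
    (x : Fin 2 → ℝ) :
    DenseRange (fun t : ℝ => (fun i => (↑(x i + t * v i) : AddCircle (1 : ℝ)))) := by
  have hv0 : v 0 ≠ 0 := fun h => by simp [h] at hv
  set α := v 1 / v 0
  intro z
  obtain ⟨y, hy⟩ := QuotientAddGroup.mk_surjective (z 0)
  set c : AddCircle (1 : ℝ) := ↑(x 1 + (y - x 0) * α)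
  have hfiber : DenseRange (fun n : ℤ => c + n • (α : AddCircle (1 : ℝ))) :=
    (Homeomorph.addLeft c).surjective.denseRange.comp
      (AddCircle.denseRange_zsmul_coe_iff.2 (by simpa using hv)) (Homeomorph.addLeft c).continuous
  have hsub : Function.update z 1 '' Set.range (fun n : ℤ => c + n • (α : AddCircle (1 : ℝ))) ⊆
      Set.range (fun t : ℝ => (fun i => (↑(x i + t * v i) : AddCircle (1 : ℝ)))) := by
    rintro _ ⟨_, ⟨n, rfl⟩, rfl⟩
    refine ⟨(y - x 0 + n) / v 0, funext fun i => ?_⟩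
    fin_cases i
    · have h0 : x 0 + (y - x 0 + n) / v 0 * v 0 = y + n • (1 : ℝ) := by field_simp; ring
      simp [h0, hy]
    · have h1 : x 1 + (y - x 0 + n) / v 0 * v 1 = x 1 + (y - x 0) * α + n • α := by
        simp only [α, zsmul_eq_mul]; field_simp; ring
      simp [h1, c]
  have hz : z ∈ Set.range (Function.update z 1) := ⟨z 1, by simp⟩
  have hcont : Continuous (Function.update z 1) := continuous_const.update 1 continuous_id
  exact closure_mono hsub (hcont.range_subset_closure_image_dense hfiber hz)

theorem anosov_eigendirection_flow_dense_general (A : Matrix (Fin 2) (Fin 2) ℤ)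
    (htr : A.trace > 2)
    (lamP : ℝ)
    (hP : lamP = ((A.trace : ℝ) + Real.sqrt ((A.trace : ℝ) ^ 2 - 4)) / 2)
    (v : Fin 2 → ℝ) (hv : v ≠ 0)
    (heig : (A.map (Int.cast : ℤ → ℝ)).mulVec v = lamP • v)
    (x : Fin 2 → ℝ) :
    DenseRange (fun t : ℝ =>
      (fun i => (↑(x i + t * v i) : AddCircle (1 : ℝ)) : Fin 2 → AddCircle (1 : ℝ))) := by
  have hlamP : Irrational lamP := hP ▸ irrational_add_sqrt_sq_sub_four_div_two htr
  exact denseRange_addCircle_linear_flow (irrational_slope_of_mulVec_eq_smul hlamP hv heig) x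

/-- Let `A` be a 2×2 integer matrix with `det A = 1`, `tr A > 2`, and let `v` be
a nonzero real eigenvector for the eigenvalue `λ₊ = (tr A + √((tr A)² − 4))/2`.
Then every orbit of the linear flow on the 2-torus in direction `v` is dense. -/
theorem anosov_eigendirection_flow_dense (A : Matrix (Fin 2) (Fin 2) ℤ)
    (hdet : A.det = 1) (htr : A.trace > 2)
    (lamP : ℝ)
    (hP : lamP = ((A.trace : ℝ) + Real.sqrt ((A.trace : ℝ) ^ 2 - 4)) / 2)
    (v : Fin 2 → ℝ) (hv : v ≠ 0)
    (heig : (A.map (Int.cast : ℤ → ℝ)).mulVec v = lamP • v)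
    (x : Fin 2 → ℝ) :
    DenseRange (fun t : ℝ =>
      (fun i => (↑(x i + t * v i) : AddCircle (1 : ℝ)) : Fin 2 → AddCircle (1 : ℝ))) :=
  anosov_eigendirection_flow_dense_general A htr lamP hP v hv heig x
end

section
/- Let n ≥ 1 and let a = (a₁, …, aₙ) ∈ ℝⁿ be such that a₁, …, aₙ are linearly independent over ℚ and every aᵢ is an algebraic number (algebraic over ℚ). Then a is Diophantine: there exist real numbers C > 0 and τ > 0 such that for every nonzero m ∈ ℤⁿ one has |m₁·a₁ + ⋯ + mₙ·aₙ| ≥ C/‖m‖^τ, where ‖m‖ = max₁≤i≤n |mᵢ|. -/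
/-!
If `D` clears the denominators of the `aᵢ`, then `D·⟨m, a⟩` is an algebraic integer of the number
field `K = ℚ(a₁, …, aₙ)`, nonzero by linear independence, so its norm is a nonzero integer. The
norm is the product of the `[K : ℚ]` conjugates; all of them are `O(‖m‖)`, so the real one,
`D·⟨m, a⟩` itself, is at least a constant times `‖m‖^(1 - [K : ℚ])` (Liouville's argument).
-/

open NumberField Module Finset

lemma natCast_sup_natAbs_eq_pi_norm {ι : Type*} [Fintype ι] (m : ι → ℤ) :
    ((univ.sup fun i => (m i).natAbs : ℕ) : ℝ) = ‖m‖ := by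
  rw [Pi.norm_def, ← NNReal.coe_natCast, Nat.cast_finsetSup]
  simp [NNReal.natCast_natAbs]

lemma one_le_pi_norm_of_ne_zero {ι : Type*} [Fintype ι] {m : ι → ℤ} (hm : m ≠ 0) : 1 ≤ ‖m‖ := by
  obtain ⟨i, hi⟩ := Function.ne_iff.mp hm
  calc 1 ≤ ‖m i‖ := by rw [Int.norm_eq_abs]; exact_mod_cast Int.one_le_abs hi
    _ ≤ ‖m‖ := norm_le_pi_norm m i

namespace NumberField

variable {K : Type*} [Field K] [NumberField K]

lemma one_le_norm_norm_of_isIntegral {α : K} (hα : IsIntegral ℤ α) (hα0 : α ≠ 0) :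
    1 ≤ ‖Algebra.norm ℚ α‖ := by
  let x : 𝓞 K := ⟨α, hα⟩
  have hx0 : x ≠ 0 := fun h => hα0 congr(($h : K))
  change 1 ≤ ‖Algebra.norm ℚ (x : K)‖
  rw [← Algebra.coe_norm_int, Int.norm_cast_rat, Int.norm_eq_abs]
  exact_mod_cast Int.one_le_abs (Algebra.norm_ne_zero_iff.mpr hx0)

lemma one_le_norm_embedding_mul_pow_of_house_le {α : K} (hα : IsIntegral ℤ α) (hα0 : α ≠ 0)
    (σ : K →+* ℂ) {H : ℝ} (hH : house α ≤ H) :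
    1 ≤ ‖σ α‖ * H ^ (finrank ℚ K - 1) :=
  calc 1 ≤ ‖Algebra.norm ℚ α‖ := one_le_norm_norm_of_isIntegral hα hα0
    _ ≤ ‖σ α‖ * house α ^ (finrank ℚ K - 1) := norm_norm_le_norm_mul_house_pow α σ
    _ ≤ ‖σ α‖ * H ^ (finrank ℚ K - 1) := by gcongr; exact house_nonneg α

lemma exists_intCast_mul_isIntegral {ι : Type*} [Fintype ι] (b : ι → K) :
    ∃ D : ℤ, D ≠ 0 ∧ ∀ i, IsIntegral ℤ ((D : K) * b i) := by
  classical
  obtain ⟨D, hD0, hD⟩ := exists_integral_multiples ℤ ℚ (univ.image b)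
  exact ⟨D, hD0, fun i => by simpa [zsmul_eq_mul] using hD (b i) (mem_image_of_mem b (mem_univ i))⟩

lemma house_sum_intCast_mul_le {ι : Type*} [Fintype ι] (m : ι → ℤ) (b : ι → K) :
    house (∑ i, (m i : K) * b i) ≤ ‖m‖ * ∑ i, house (b i) :=
  calc house (∑ i, (m i : K) * b i) ≤ ∑ i, house ((m i : K) * b i) := house_sum_le_sum_house _ _
    _ ≤ ∑ i, ‖m‖ * house (b i) := by
      gcongr with i
      refine (house_mul_le _ _).trans (mul_le_mul_of_nonneg_right ?_ (house_nonneg _))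
      rw [house_intCast, Int.cast_abs, ← Int.norm_eq_abs]
      exact norm_le_pi_norm m i
    _ = ‖m‖ * ∑ i, house (b i) := (mul_sum _ _ _).symm

theorem exists_pos_le_norm_embedding_sum_mul_pow {ι : Type*} [Fintype ι] {b : ι → K}
    (hb : LinearIndependent ℚ b) (σ : K →+* ℂ) :
    ∃ C > (0 : ℝ), ∀ m : ι → ℤ, m ≠ 0 →
      C ≤ ‖σ (∑ i, (m i : K) * b i)‖ * ‖m‖ ^ (finrank ℚ K - 1) := by
  obtain ⟨D, hD0, hDb⟩ := exists_intCast_mul_isIntegral b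
  set B := 1 + ∑ i, house (b i)
  have hB : 0 < B := add_pos_of_pos_of_nonneg one_pos (sum_nonneg fun i _ => house_nonneg _)
  refine ⟨1 / (|(D : ℝ)| * (|(D : ℝ)| * B) ^ (finrank ℚ K - 1)), by positivity, fun m hm => ?_⟩
  set α := ∑ i, (m i : K) * b i
  have hα0 : α ≠ 0 := by
    refine fun h => hm (funext fun i => ?_)
    have hsum : ∑ i, (m i : ℚ) • b i = α := by simp [α, Rat.smul_def]
    exact_mod_cast Fintype.linearIndependent_iff.mp hb (fun i => (m i : ℚ)) (hsum.trans h) i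
  have hDα : IsIntegral ℤ ((D : K) * α) := by
    rw [mul_sum]
    refine IsIntegral.sum _ fun i _ => ?_
    rw [mul_left_comm]
    exact isIntegral_algebraMap.mul (hDb i)
  have hhouse : house ((D : K) * α) ≤ |(D : ℝ)| * B * ‖m‖ := calc
    house ((D : K) * α) ≤ |(D : ℝ)| * (‖m‖ * ∑ i, house (b i)) := by
      refine (house_mul_le _ _).trans ?_
      rw [house_intCast, Int.cast_abs]
      gcongr
      exact house_sum_intCast_mul_le m b
    _ ≤ |(D : ℝ)| * (‖m‖ * B) := by gcongr; linarith
    _ = |(D : ℝ)| * B * ‖m‖ := by ring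
  have hliouville := one_le_norm_embedding_mul_pow_of_house_le hDα
    (mul_ne_zero (Int.cast_ne_zero.mpr hD0) hα0) σ hhouse
  rw [map_mul, map_intCast, norm_mul, Complex.norm_intCast, mul_pow] at hliouville
  rw [div_le_iff₀ (by positivity)]
  calc 1 ≤ _ := hliouville
    _ = _ := by ring

end NumberField

theorem algebraic_vector_is_diophantine_general (n : ℕ) (a : Fin n → ℝ)
    (hindep : LinearIndependent ℚ a)
    (halg : ∀ i, IsAlgebraic ℚ (a i)) :
    ∃ C > (0 : ℝ), ∃ τ > (0 : ℝ), ∀ m : Fin n → ℤ, m ≠ 0 →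
      C / ((Finset.univ.sup fun i => (m i).natAbs : ℕ) : ℝ) ^ τ ≤
        |∑ i, (m i : ℝ) * a i| := by
  let K := IntermediateField.adjoin ℚ (Set.range a)
  have : FiniteDimensional ℚ K :=
    IntermediateField.finiteDimensional_adjoin fun _ ⟨i, hi⟩ => hi ▸ (halg i).isIntegral
  have : NumberField K := ⟨⟩
  let b : Fin n → K := fun i => ⟨a i, IntermediateField.subset_adjoin ℚ _ ⟨i, rfl⟩⟩
  have hb : LinearIndependent ℚ b := .of_comp K.val.toLinearMap hindep
  let σ : K →+* ℂ := Complex.ofRealHom.comp K.val.toRingHom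
  obtain ⟨C, hC, hlow⟩ := exists_pos_le_norm_embedding_sum_mul_pow hb σ
  refine ⟨C, hC, finrank ℚ K, Nat.cast_pos.mpr finrank_pos, fun m hm => ?_⟩
  have hm1 := one_le_pi_norm_of_ne_zero hm
  rw [natCast_sup_natAbs_eq_pi_norm, Real.rpow_natCast, div_le_iff₀ (by positivity)]
  have hσ : ‖σ (∑ i, (m i : K) * b i)‖ = |∑ i, (m i : ℝ) * a i| := by
    change ‖((K.val (∑ i, (m i : K) * b i) : ℝ) : ℂ)‖ = _
    rw [Complex.norm_real, Real.norm_eq_abs]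
    simp [b]
  calc C ≤ |∑ i, (m i : ℝ) * a i| * ‖m‖ ^ (finrank ℚ K - 1) := hσ ▸ hlow m hm
    _ ≤ |∑ i, (m i : ℝ) * a i| * ‖m‖ ^ finrank ℚ K := by gcongr; exact Nat.sub_le _ _

/-- A vector `a ∈ ℝⁿ` whose components are linearly independent over `ℚ` and
all algebraic over `ℚ` is Diophantine: there exist `C > 0` and `τ > 0` such
that `|⟨m, a⟩| ≥ C / ‖m‖^τ` for every nonzero integer vector `m`, where
`‖m‖ = maxᵢ |mᵢ|`. -/
theorem algebraic_vector_is_diophantine (n : ℕ) (hn : 1 ≤ n) (a : Fin n → ℝ)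
    (hindep : LinearIndependent ℚ a)
    (halg : ∀ i, IsAlgebraic ℚ (a i)) :
    ∃ C > (0 : ℝ), ∃ τ > (0 : ℝ), ∀ m : Fin n → ℤ, m ≠ 0 →
      C / ((Finset.univ.sup fun i => (m i).natAbs : ℕ) : ℝ) ^ τ ≤
        |∑ i, (m i : ℝ) * a i| :=
  algebraic_vector_is_diophantine_general n a hindep halg
end

section
/- Let (X, μ) be a finite measure space and let φ : ℝ × X → X be a jointly measurable flow (φ(0, x) = x and φ(s + t, x) = φ(s, φ(t, x)) for all s, t ∈ ℝ and x ∈ X) such that for each t ∈ ℝ the map x ↦ φ(t, x) preserves the measure μ. Let κ : X → ℝ be a bounded measurable function. If for μ-almost every x ∈ X there exists M(x) < ∞ such that |∫₀ᵗ κ(φ(s, x)) ds| ≤ M(x) for all t ≥ 0, then ∫_X κ dμ = 0. -/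
/-!
For every `T ≠ 0`, Fubini's theorem and the invariance of `μ` under each time-`s` map show that the
time average `(1/T) ∫₀ᵀ κ(φ(s, x)) ds` has the same space integral as `κ`. These averages are
bounded by `sup |κ|`, and they tend to `0` almost everywhere as `T → ∞` because the time
integrals are bounded, so dominated convergence gives `∫ κ dμ = 0`.
-/

open MeasureTheory Filter Topology

namespace MeasureTheory

theorem MeasurePreserving.integral_comp_of_aestronglyMeasurable {α β E : Type*}
    [MeasurableSpace α] [MeasurableSpace β] [NormedAddCommGroup E] [NormedSpace ℝ E]
    {μ : Measure α} {ν : Measure β} {f : α → β} (hf : MeasurePreserving f μ ν) {g : β → E}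
    (hg : AEStronglyMeasurable g ν) : ∫ x, g (f x) ∂μ = ∫ y, g y ∂ν := by
  rw [← hf.map_eq] at hg ⊢
  exact (integral_map hf.measurable.aemeasurable hg).symm

variable {X : Type*} {φ : ℝ × X → X} {κ : X → ℝ}

noncomputable def timeAverage (φ : ℝ × X → X) (κ : X → ℝ) (T : ℝ) (x : X) : ℝ :=
  (∫ s in (0 : ℝ)..T, κ (φ (s, x))) / T

theorem abs_timeAverage_le {B : ℝ} (hB : ∀ x, |κ x| ≤ B) {T : ℝ} (hT : T ≠ 0) (x : X) :
    |timeAverage φ κ T x| ≤ B := by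
  have h := intervalIntegral.norm_integral_le_of_norm_le_const (a := 0) (b := T)
    (fun s _ => (Real.norm_eq_abs (κ (φ (s, x)))).trans_le (hB _))
  rw [timeAverage, abs_div, div_le_iff₀ (abs_pos.2 hT)]
  simpa only [Real.norm_eq_abs, sub_zero] using h

theorem tendsto_timeAverage_zero {x : X} {M : ℝ}
    (hM : ∀ t, 0 ≤ t → |∫ s in (0 : ℝ)..t, κ (φ (s, x))| ≤ M) :
    Tendsto (fun T => timeAverage φ κ T x) atTop (𝓝 0) := by
  unfold timeAverage
  simp_rw [div_eq_mul_inv]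
  refine isBoundedUnder_le_mul_tendsto_zero (isBoundedUnder_of_eventually_le (a := M) ?_)
    tendsto_inv_atTop_zero
  filter_upwards [eventually_ge_atTop 0] with t ht using hM t ht

variable [MeasurableSpace X] {μ : Measure X}

theorem measurable_timeAverage (hφ : Measurable φ) (hκ : Measurable κ) (T : ℝ) :
    Measurable (timeAverage φ κ T) := by
  have hprod : StronglyMeasurable fun p : ℝ × X => κ (φ p) := (hκ.comp hφ).stronglyMeasurable
  unfold timeAverage
  simp_rw [intervalIntegral.intervalIntegral_eq_integral_uIoc, smul_eq_mul]
  exact (hprod.integral_prod_left'.measurable.const_mul _).div_const _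

theorem integral_intervalIntegral_comp_flow [SFinite μ] (hφ : Measurable φ)
    (hpres : ∀ t, MeasurePreserving (fun x => φ (t, x)) μ μ) (hκ : Measurable κ)
    (hκi : Integrable κ μ) (a b : ℝ) :
    ∫ x, (∫ s in a..b, κ (φ (s, x))) ∂μ = (b - a) * ∫ x, κ x ∂μ := by
  have hint : Integrable (κ ∘ φ) ((volume.restrict (Set.uIoc a b)).prod μ) := by
    refine (integrable_prod_iff (hκ.comp hφ).aestronglyMeasurable).2
      ⟨ae_of_all _ fun s => (hpres s).integrable_comp_of_integrable hκi, ?_⟩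
    simp_rw [Function.comp_apply,
      (hpres _).integral_comp_of_aestronglyMeasurable hκi.norm.aestronglyMeasurable]
    exact integrableOn_const (by simp [Real.volume_uIoc])
  rw [← intervalIntegral_integral_swap (f := fun s x => κ (φ (s, x))) hint]
  simp_rw [(hpres _).integral_comp_of_aestronglyMeasurable hκi.aestronglyMeasurable,
    intervalIntegral.integral_const, smul_eq_mul]

theorem integral_timeAverage [SFinite μ] (hφ : Measurable φ)
    (hpres : ∀ t, MeasurePreserving (fun x => φ (t, x)) μ μ) (hκ : Measurable κ)
    (hκi : Integrable κ μ) {T : ℝ} (hT : T ≠ 0) :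
    ∫ x, timeAverage φ κ T x ∂μ = ∫ x, κ x ∂μ := by
  simp only [timeAverage]
  rw [integral_div, integral_intervalIntegral_comp_flow hφ hpres hκ hκi,
    sub_zero, mul_div_cancel_left₀ _ hT]

end MeasureTheory

theorem integral_zero_of_bounded_time_integrals_general
    {X : Type*} [MeasurableSpace X] (μ : Measure X) [IsFiniteMeasure μ]
    (φ : ℝ × X → X) (hφmeas : Measurable φ)
    (hφpres : ∀ t : ℝ, MeasurePreserving (fun x => φ (t, x)) μ μ)
    (κ : X → ℝ) (hκmeas : Measurable κ) (hκbdd : ∃ B : ℝ, ∀ x, |κ x| ≤ B)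
    (hbound : ∀ᵐ x ∂μ, ∃ M : ℝ, ∀ t : ℝ, 0 ≤ t →
      |∫ s in (0 : ℝ)..t, κ (φ (s, x))| ≤ M) :
    ∫ x, κ x ∂μ = 0 := by
  obtain ⟨B, hB⟩ := hκbdd
  have hκi : Integrable κ μ :=
    (integrable_const B).mono' hκmeas.aestronglyMeasurable (ae_of_all _ hB)
  have hlim : Tendsto (fun T => ∫ x, timeAverage φ κ T x ∂μ) atTop (𝓝 0) := by
    simpa only [integral_zero] using tendsto_integral_filter_of_dominated_convergence (fun _ => B)
      (Eventually.of_forall fun T =>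
        (measurable_timeAverage hφmeas hκmeas T).aestronglyMeasurable)
      ((eventually_ne_atTop 0).mono fun T hT => ae_of_all _ (abs_timeAverage_le hB hT))
      (integrable_const B) (hbound.mono fun x ⟨M, hM⟩ => tendsto_timeAverage_zero hM)
  refine tendsto_nhds_unique (tendsto_const_nhds.congr' ?_) hlim
  filter_upwards [eventually_ne_atTop 0] with T hT
  exact (integral_timeAverage hφmeas hφpres hκmeas hκi hT).symm

/-- Let `(X, μ)` be a finite measure space and `φ` a jointly measurable,
measure-preserving flow on `X`. If `κ : X → ℝ` is bounded and measurable and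
for `μ`-a.e. `x` the integrals `∫₀ᵗ κ(φ(s,x)) ds`, `t ≥ 0`, are uniformly
bounded, then `∫ κ dμ = 0`. -/
theorem integral_zero_of_bounded_time_integrals
    {X : Type*} [MeasurableSpace X] (μ : Measure X) [IsFiniteMeasure μ]
    (φ : ℝ × X → X) (hφmeas : Measurable φ)
    (hφ0 : ∀ x, φ (0, x) = x)
    (hφadd : ∀ s t : ℝ, ∀ x, φ (s + t, x) = φ (s, φ (t, x)))
    (hφpres : ∀ t : ℝ, MeasurePreserving (fun x => φ (t, x)) μ μ)
    (κ : X → ℝ) (hκmeas : Measurable κ) (hκbdd : ∃ B : ℝ, ∀ x, |κ x| ≤ B)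
    (hbound : ∀ᵐ x ∂μ, ∃ M : ℝ, ∀ t : ℝ, 0 ≤ t →
      |∫ s in (0 : ℝ)..t, κ (φ (s, x))| ≤ M) :
    ∫ x, κ x ∂μ = 0 :=
  integral_zero_of_bounded_time_integrals_general μ φ hφmeas hφpres κ hκmeas hκbdd hbound
end
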